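/- arXiv:0901.1140 — 7 statements merged into one kernel-verified Lean document; each statement's English description precedes it below -/
import Mathlib

section
/- Let (p*, Opt) be an optimal solution of the pricing instance, where Opt = {j : p*(I_j) ≤ B_j} is the set of customers who can afford their bundle under p*, let B_max = max_j B_j, and let ε > 0. Set δ = ε·B_max/(nm) and P = ⌈nm/ε⌉. Then there exists a pricing p̃ assigning each item a price from the grid {0, δ, 2δ, …, Pδ} such that (i) p̃(I_j) ≤ B_j/(1+ε) for every j ∈ Opt, and (ii) Σ_{j∈Opt} p̃(I_j) ≥ (1−2ε)·Σ_{j∈Opt} p*(I_j). -/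
/-!
Cap every optimal price at `B_max`, shrink it by the factor `1 + ε` and round it down to the grid
`δ ℕ`. Shrinking and rounding down keep every customer of `Opt` within `B_j / (1 + ε)`; the cap
changes no price of an item sold to `Opt` and keeps all grid indices below `B_max / δ = nm / ε`.
Rounding loses less than `δ` per item, hence at most `nmδ = ε B_max` in total, and `B_max` is at
most the optimal profit, since the customer with the largest budget alone pays `B_max` under a
suitable uniform pricing. Finally `1 / (1 + ε) ≥ 1 - ε`.
-/

open Finset

section LinearOrderedField

variable {K : Type*} [Field K] [LinearOrder K] [IsStrictOrderedRing K]

theorem one_sub_mul_le_div_one_add {ε S : K} (hε : 0 ≤ ε) (hS : 0 ≤ S) :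
    (1 - ε) * S ≤ S / (1 + ε) := by
  rw [le_div_iff₀ (by linarith)]
  nlinarith [mul_nonneg (sq_nonneg ε) hS]

variable [FloorSemiring K]

theorem Nat.floor_div_mul_le {x δ : K} (hx : 0 ≤ x) (hδ : 0 < δ) :
    ⌊x / δ⌋₊ * δ ≤ x :=
  (le_div_iff₀ hδ).1 (Nat.floor_le (div_nonneg hx hδ.le))

theorem Nat.sub_lt_floor_div_mul (x : K) {δ : K} (hδ : 0 < δ) :
    x - δ < ⌊x / δ⌋₊ * δ := by
  have h := Nat.lt_floor_add_one (x / δ)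
  rw [div_lt_iff₀ hδ] at h
  linarith

end LinearOrderedField

theorem Nat.cast_floor_le_ceil_of_le {R : Type*} [Ring R] [LinearOrder R] [IsStrictOrderedRing R]
    [FloorRing R] {x y : R} (hxy : x ≤ y) (hy : 0 ≤ y) : (⌊x⌋₊ : ℤ) ≤ ⌈y⌉ :=
  (Nat.cast_le.2 (Nat.floor_le_floor hxy)).trans
    ((Int.natCast_floor_eq_floor hy).trans_le (Int.floor_le_ceil y))

theorem Finset.sum_sub_card_mul_le_sum {ι R : Type*} [Ring R] [PartialOrder R] [IsOrderedRing R]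
    {s : Finset ι} {f g : ι → R} {c : R} (h : ∀ i ∈ s, g i - c ≤ f i) :
    ∑ i ∈ s, g i - #s * c ≤ ∑ i ∈ s, f i := by
  rw [← nsmul_eq_mul, ← sum_const, ← sum_sub_distrib]
  exact sum_le_sum h

theorem card_mul_mul_div_mul_le {m : ℕ} (T : Finset (Fin m)) (n : ℕ) {c : ℝ}
    (hc : 0 ≤ c) :
    #T * (n * (c / ((n * m : ℕ) : ℝ))) ≤ c := by
  calc #T * (n * (c / ((n * m : ℕ) : ℝ))) ≤ m * (n * (c / ((n * m : ℕ) : ℝ))) := by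
        gcongr
        exact (card_le_univ _).trans_eq (Fintype.card_fin m)
    _ = ((n * m : ℕ) : ℝ) * (c / ((n * m : ℕ) : ℝ)) := by push_cast; ring
    _ ≤ c := by
        rcases eq_or_ne ((n * m : ℕ) : ℝ) 0 with h | h
        · simpa [h] using hc
        · rw [mul_div_cancel₀ _ h]

section Profit

variable {ι E : Type*} [Fintype ι] (I : ι → Finset E) (B : ι → ℝ)

noncomputable def profit (p : E → ℝ) : ℝ :=
  ∑ j, if ∑ e ∈ I j, p e ≤ B j then ∑ e ∈ I j, p e else 0

theorem profit_eq_sum_filter (p : E → ℝ) :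
    profit I B p =
      ∑ j ∈ univ.filter (fun j => ∑ e ∈ I j, p e ≤ B j), ∑ e ∈ I j, p e :=
  (sum_filter _ _).symm

variable {I B}

theorem sum_le_profit {p : E → ℝ} (hp : ∀ e, 0 ≤ p e) {j : ι}
    (hj : ∑ e ∈ I j, p e ≤ B j) : ∑ e ∈ I j, p e ≤ profit I B p := by
  rw [profit_eq_sum_filter]
  exact single_le_sum (f := fun j => ∑ e ∈ I j, p e)
    (fun j _ => sum_nonneg fun e _ => hp e) (mem_filter.2 ⟨mem_univ j, hj⟩)

theorem le_profit_const {j : ι} (hI : (I j).Nonempty) (hB : 0 ≤ B j) :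
    B j ≤ profit I B (fun _ => B j / #(I j)) := by
  have hsum : ∑ _e ∈ I j, B j / #(I j) = B j := by
    rw [sum_const, nsmul_eq_mul, mul_div_cancel₀ _ (by exact_mod_cast hI.card_pos.ne')]
  have h := sum_le_profit (fun _ => div_nonneg hB (Nat.cast_nonneg _)) hsum.le
  rwa [hsum] at h

end Profit

section RoundedPricing

variable {E : Type*} {p : E → ℝ} {c ε δ : ℝ}

noncomputable def roundedPricing (p : E → ℝ) (c ε δ : ℝ) (e : E) : ℝ :=
  ⌊min (p e) c / (1 + ε) / δ⌋₊ * δ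

theorem roundedPricing_mem_grid (hc : 0 ≤ c) (hε : 0 ≤ ε) (hδ : 0 < δ) (e : E) :
    ∃ k : ℕ, (k : ℤ) ≤ ⌈c / δ⌉ ∧ roundedPricing p c ε δ e = k * δ := by
  refine ⟨_, Nat.cast_floor_le_ceil_of_le ?_ (div_nonneg hc hδ.le), rfl⟩
  gcongr
  rcases le_total 0 (min (p e) c) with h | h
  · exact (div_le_self h (by linarith)).trans (min_le_right _ _)
  · exact (div_nonpos_of_nonpos_of_nonneg h (by linarith)).trans hc

theorem roundedPricing_le {e : E} (hp : 0 ≤ p e) (hc : 0 ≤ c) (hε : 0 ≤ ε) (hδ : 0 < δ) :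
    roundedPricing p c ε δ e ≤ p e / (1 + ε) :=
  (Nat.floor_div_mul_le (div_nonneg (le_min hp hc) (by linarith)) hδ).trans
    (by gcongr; exact min_le_left _ _)

theorem sub_lt_roundedPricing {e : E} (hpc : p e ≤ c) (hδ : 0 < δ) :
    p e / (1 + ε) - δ < roundedPricing p c ε δ e := by
  simpa only [roundedPricing, min_eq_left hpc] using
    Nat.sub_lt_floor_div_mul (p e / (1 + ε)) hδ

theorem sum_roundedPricing_le (s : Finset E) (hp : ∀ e, 0 ≤ p e) (hc : 0 ≤ c) (hε : 0 ≤ ε)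
    (hδ : 0 < δ) : ∑ e ∈ s, roundedPricing p c ε δ e ≤ (∑ e ∈ s, p e) / (1 + ε) := by
  rw [sum_div]
  exact sum_le_sum fun e _ => roundedPricing_le (hp e) hc hε hδ

theorem sum_sub_card_mul_le_sum_roundedPricing {s : Finset E} (hs : ∀ e ∈ s, p e ≤ c)
    (hδ : 0 < δ) :
    (∑ e ∈ s, p e) / (1 + ε) - #s * δ ≤ ∑ e ∈ s, roundedPricing p c ε δ e := by
  rw [sum_div]
  exact sum_sub_card_mul_le_sum fun e he => (sub_lt_roundedPricing (hs e he) hδ).le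

theorem sum_sub_card_mul_le_sum_sum_roundedPricing [Fintype E] {ι : Type*} {T : Finset ι}
    {I : ι → Finset E} (hT : ∀ j ∈ T, ∀ e ∈ I j, p e ≤ c) (hδ : 0 < δ) :
    (∑ j ∈ T, ∑ e ∈ I j, p e) / (1 + ε) - #T * (Fintype.card E * δ) ≤
      ∑ j ∈ T, ∑ e ∈ I j, roundedPricing p c ε δ e := by
  rw [sum_div]
  refine sum_sub_card_mul_le_sum fun j hj => ?_
  calc _ ≤ (∑ e ∈ I j, p e) / (1 + ε) - #(I j) * δ := by
        gcongr
        exact card_le_univ _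
    _ ≤ _ := sum_sub_card_mul_le_sum_roundedPricing (hT j hj) hδ

end RoundedPricing

theorem epsilon_optimal_prices_general
    (E : Type*) [Fintype E]
    (m : ℕ)
    (I : Fin m → Finset E) (hI : ∀ j, (I j).Nonempty)
    (B : Fin m → ℝ)
    (Bmax : ℝ) (hBmax : IsGreatest (Set.range B) Bmax)
    (pstar : E → ℝ) (hpstar : ∀ e, 0 ≤ pstar e)
    (hopt : ∀ p : E → ℝ, (∀ e, 0 ≤ p e) →
      (∑ j, if ∑ e ∈ I j, p e ≤ B j then ∑ e ∈ I j, p e else 0) ≤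
        ∑ j, if ∑ e ∈ I j, pstar e ≤ B j then ∑ e ∈ I j, pstar e else 0)
    (ε : ℝ) (hε : 0 < ε) :
    ∃ ptilde : E → ℝ,
      (∀ e : E, ∃ k : ℕ,
          (k : ℤ) ≤ ⌈((Fintype.card E * m : ℕ) : ℝ) / ε⌉ ∧
          ptilde e = (k : ℝ) * (ε * Bmax / ((Fintype.card E * m : ℕ) : ℝ))) ∧
      (∀ j : Fin m, ∑ e ∈ I j, pstar e ≤ B j →
          ∑ e ∈ I j, ptilde e ≤ B j / (1 + ε)) ∧
      (1 - 2 * ε) *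
          (∑ j ∈ Finset.univ.filter (fun j => ∑ e ∈ I j, pstar e ≤ B j),
            ∑ e ∈ I j, pstar e) ≤
        ∑ j ∈ Finset.univ.filter (fun j => ∑ e ∈ I j, pstar e ≤ B j),
          ∑ e ∈ I j, ptilde e := by
  obtain ⟨⟨j₀, rfl⟩, hle⟩ := hBmax
  set Opt := univ.filter (fun j => ∑ e ∈ I j, pstar e ≤ B j)
  rcases le_or_gt (B j₀) 0 with hB₀ | hB₀
  · have hsum_nonneg : ∀ j, 0 ≤ ∑ e ∈ I j, pstar e := fun j =>
      sum_nonneg fun e _ => hpstar e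
    have hzero : ∀ j ∈ Opt, ∑ e ∈ I j, pstar e = 0 := fun j hj =>
      ((mem_filter.1 hj).2.trans ((hle ⟨j, rfl⟩).trans hB₀)).antisymm (hsum_nonneg j)
    refine ⟨0, fun _ => ⟨0, Int.ceil_nonneg (by positivity), by simp⟩, fun j hj => ?_, ?_⟩
    · simpa using div_nonneg ((hsum_nonneg j).trans hj) (by positivity)
    · simp [sum_eq_zero hzero]
  set N : ℝ := ((Fintype.card E * m : ℕ) : ℝ)
  set δ := ε * B j₀ / N
  have hδ : 0 < δ := div_pos (by positivity) <|
    Nat.cast_pos.2 (Nat.mul_pos ((hI j₀).card_pos.trans_le (card_le_univ _)) j₀.pos)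
  have hgrid : B j₀ / δ = N / ε := by simp only [δ]; field_simp
  have hS : B j₀ ≤ ∑ j ∈ Opt, ∑ e ∈ I j, pstar e :=
    (le_profit_const (hI j₀) hB₀.le).trans
      ((hopt _ fun _ => by positivity).trans_eq (profit_eq_sum_filter I B pstar))
  have hOpt : ∀ j ∈ Opt, ∀ e ∈ I j, pstar e ≤ B j₀ := fun j hj e he =>
    (single_le_sum (fun i _ => hpstar i) he).trans ((mem_filter.1 hj).2.trans (hle ⟨j, rfl⟩))
  refine ⟨roundedPricing pstar (B j₀) ε δ,
    fun e => hgrid ▸ roundedPricing_mem_grid hB₀.le hε.le hδ e,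
    fun j hj => (sum_roundedPricing_le _ hpstar hB₀.le hε.le hδ).trans (by gcongr), ?_⟩
  nlinarith [sum_sub_card_mul_le_sum_sum_roundedPricing (ε := ε) hOpt hδ,
    card_mul_mul_div_mul_le Opt (Fintype.card E) (by positivity : 0 ≤ ε * B j₀),
    one_sub_mul_le_div_one_add hε.le (hB₀.le.trans hS)]

/-- Proposition 1, ε-optimal prices.
Given a pricing instance with `n ≥ 1` items `E`, `m ≥ 1` customers with nonempty
bundles `I j` and budgets `B j ≥ 0`, an optimal pricing `pstar`, `Bmax = max_j B j`,
and `ε > 0`, set `δ = ε * Bmax / (n * m)` and `P = ⌈n * m / ε⌉`. Then there is a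
pricing `ptilde` taking values in the grid `{0, δ, 2δ, …, Pδ}` such that
(i) `ptilde(I j) ≤ B j / (1 + ε)` for every `j` in `Opt = {j : pstar(I j) ≤ B j}`, and
(ii) `∑_{j ∈ Opt} ptilde(I j) ≥ (1 - 2ε) ∑_{j ∈ Opt} pstar(I j)`. -/
theorem epsilon_optimal_prices
    (E : Type*) [Fintype E] (hn : 1 ≤ Fintype.card E)
    (m : ℕ) (hm : 1 ≤ m)
    (I : Fin m → Finset E) (hI : ∀ j, (I j).Nonempty)
    (B : Fin m → ℝ) (hB : ∀ j, 0 ≤ B j)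
    (Bmax : ℝ) (hBmax : IsGreatest (Set.range B) Bmax)
    (pstar : E → ℝ) (hpstar : ∀ e, 0 ≤ pstar e)
    (hopt : ∀ p : E → ℝ, (∀ e, 0 ≤ p e) →
      (∑ j, if ∑ e ∈ I j, p e ≤ B j then ∑ e ∈ I j, p e else 0) ≤
        ∑ j, if ∑ e ∈ I j, pstar e ≤ B j then ∑ e ∈ I j, pstar e else 0)
    (ε : ℝ) (hε : 0 < ε) :
    ∃ ptilde : E → ℝ,
      (∀ e : E, ∃ k : ℕ,
          (k : ℤ) ≤ ⌈((Fintype.card E * m : ℕ) : ℝ) / ε⌉ ∧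
          ptilde e = (k : ℝ) * (ε * Bmax / ((Fintype.card E * m : ℕ) : ℝ))) ∧
      (∀ j : Fin m, ∑ e ∈ I j, pstar e ≤ B j →
          ∑ e ∈ I j, ptilde e ≤ B j / (1 + ε)) ∧
      (1 - 2 * ε) *
          (∑ j ∈ Finset.univ.filter (fun j => ∑ e ∈ I j, pstar e ≤ B j),
            ∑ e ∈ I j, pstar e) ≤
        ∑ j ∈ Finset.univ.filter (fun j => ∑ e ∈ I j, pstar e ≤ B j),
          ∑ e ∈ I j, ptilde e :=
  epsilon_optimal_prices_general E m I hI B Bmax hBmax pstar hpstar hopt ε hε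
end

section
/- Let T = (V, E) be a finite tree with n edges. Then there exists a vertex v ∈ V with the following property: letting s_1, …, s_r be the numbers of vertices of the connected components of the graph obtained from T by deleting v (and all edges incident to v), there is a subset S ⊆ {1, …, r} such that ⌊n/3⌋ ≤ Σ_{i∈S} s_i ≤ ⌈2n/3⌉. -/
/-!
A vertex `v` minimising the size of its largest branch (component of `T - v`) is a centroid:
every branch has at most `|V| / 2 = (n + 1) / 2` vertices. Otherwise let `w` be the neighbour
of `v` in a heavy branch `C`; the branch of `w` containing `v` is the complement of `C`, and
every other branch of `w` lies in `C \ {w}`, so all branches of `w` are smaller than `C`.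

The branch sizes at a centroid sum to `n`. If one of them is at least `⌊n/3⌋` it alone does the
job, since `(n + 1) / 2 ≤ ⌈2n/3⌉`. Otherwise add branches one at a time until the total reaches
`⌊n/3⌋`; the last one added overshoots by less than `⌊n/3⌋`.
-/

open Finset

namespace SimpleGraph

variable {V : Type*} (G : SimpleGraph V)

/-- The vertex set of the component of `G - v` containing `x`, or `∅` if `x = v`. -/
def branch (v x : V) : Set V := {y | ∃ p : G.Walk y x, v ∉ p.support}

variable {G} {v w x y : V}

lemma notMem_branch_left : v ∉ G.branch v x := fun ⟨p, hp⟩ => hp p.start_mem_support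

@[simp] lemma branch_self : G.branch v v = ∅ :=
  Set.eq_empty_of_forall_notMem fun _ ⟨p, hp⟩ => hp p.end_mem_support

lemma mem_branch_self (hx : x ≠ v) : x ∈ G.branch v x :=
  ⟨.nil, by simpa using hx.symm⟩

lemma branch_eq_of_mem (hy : y ∈ G.branch v x) : G.branch v y = G.branch v x := by
  obtain ⟨q, hq⟩ := hy
  ext z
  constructor
  · rintro ⟨p, hp⟩
    exact ⟨p.append q, by simp [Walk.mem_support_append_iff, hp, hq]⟩
  · rintro ⟨p, hp⟩
    exact ⟨p.append q.reverse, by simp [Walk.mem_support_append_iff, hp, hq]⟩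

lemma branch_eq_or_disjoint (v x y : V) :
    G.branch v x = G.branch v y ∨ Disjoint (G.branch v x) (G.branch v y) := by
  by_cases h : ∃ z, z ∈ G.branch v x ∧ z ∈ G.branch v y
  · obtain ⟨z, hzx, hzy⟩ := h
    exact .inl ((branch_eq_of_mem hzx).symm.trans (branch_eq_of_mem hzy))
  · exact .inr (Set.disjoint_left.2 fun z hzx hzy => h ⟨z, hzx, hzy⟩)

lemma image_val_supp_induce_eq_branch (hx : x ≠ v) :
    Subtype.val '' ((G.induce {u | u ≠ v}).connectedComponentMk ⟨x, hx⟩).supp =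
      G.branch v x := by
  ext y
  simp only [Set.mem_image, ConnectedComponent.mem_supp_iff, ConnectedComponent.eq,
    Subtype.exists]
  constructor
  · rintro ⟨y, hy, ⟨p⟩, rfl⟩
    refine ⟨p.map (Embedding.induce _).toHom, fun hv => ?_⟩
    obtain ⟨u, -, hu⟩ := List.mem_map.1 ((Walk.support_map _ _) ▸ hv)
    exact u.2 hu
  · rintro ⟨p, hp⟩
    have hs : ∀ u ∈ p.support, u ∈ {u | u ≠ v} := fun u hu h => hp (h ▸ hu)
    exact ⟨y, hs _ p.start_mem_support, ⟨p.induce _ hs⟩, rfl⟩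

lemma Preconnected.exists_adj_branch_eq (hG : G.Preconnected) (hx : x ≠ v) :
    ∃ w, G.Adj v w ∧ G.branch v x = G.branch v w := by
  classical
  obtain ⟨p⟩ := hG v x
  obtain ⟨w, hadj, q, hq⟩ := p.bypass.exists_eq_cons_of_ne hx.symm
  have hpath := p.bypass_isPath
  rw [hq, Walk.cons_isPath_iff] at hpath
  exact ⟨w, hadj, (branch_eq_of_mem ⟨q, hpath.2⟩).symm⟩

lemma IsAcyclic.mem_branch_iff (hG : G.IsAcyclic) {p : G.Walk y x} (hp : p.IsPath) :
    y ∈ G.branch v x ↔ v ∉ p.support := by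
  classical
  refine ⟨fun ⟨q, hq⟩ => ?_, fun h => ⟨p, h⟩⟩
  have : p = q.bypass := congrArg Subtype.val
    ((hG.subsingleton_path y x).elim ⟨p, hp⟩ ⟨q.bypass, q.bypass_isPath⟩)
  exact this ▸ fun h => hq (q.support_bypass_subset_support h)

lemma IsTree.compl_branch (hG : G.IsTree) (hadj : G.Adj v w) :
    (G.branch v w)ᶜ = G.branch w v := by
  ext y
  obtain ⟨p, hp⟩ := (hG.connected.preconnected y v).exists_isPath
  obtain ⟨q, hq⟩ := (hG.connected.preconnected y w).exists_isPath
  -- by uniqueness of paths, `w` is on the path from `y` to `v` iff `v` is off the one to `w`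
  rw [Set.mem_compl_iff, hG.isAcyclic.mem_branch_iff hp, hG.isAcyclic.mem_branch_iff hq, not_not]
  exact ⟨fun hv hw => hG.isAcyclic.ne_mem_support_of_support_of_adj_of_isPath hp hq hadj hw hv,
    fun hw => by_contra fun hv =>
      hw (hG.isAcyclic.mem_support_of_ne_mem_support_of_adj_of_isPath hp hq hadj hv)⟩

lemma IsTree.ncard_branch_lt_of_adj [Finite V] (hG : G.IsTree) (hadj : G.Adj v w)
    (hheavy : Nat.card V < 2 * (G.branch v w).ncard) (y : V) :
    (G.branch w y).ncard < (G.branch v w).ncard := by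
  rcases branch_eq_or_disjoint w y v with h | h
  · have := Set.ncard_add_ncard_compl (G.branch v w)
    rw [h, ← hG.compl_branch hadj]
    omega
  · refine Set.ncard_lt_ncard (LE.le.ssubset_of_mem_notMem (a := w) ?_
      (mem_branch_self hadj.ne') notMem_branch_left)
    intro z hz
    rw [← compl_compl (G.branch v w), hG.compl_branch hadj]
    exact Set.disjoint_left.1 h hz

theorem IsTree.exists_forall_two_mul_ncard_branch_le [Fintype V] (hG : G.IsTree) :
    ∃ v, ∀ x, 2 * (G.branch v x).ncard ≤ Fintype.card V := by
  have : Nonempty V := hG.connected.nonempty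
  obtain ⟨v, -, hmin⟩ := exists_min_image univ
    (fun v => univ.sup fun x => (G.branch v x).ncard) univ_nonempty
  refine ⟨v, fun x => ?_⟩
  by_contra! hheavy
  have hxv : x ≠ v := by rintro rfl; simp at hheavy
  obtain ⟨w, hadj, hxw⟩ := hG.connected.preconnected.exists_adj_branch_eq hxv
  rw [hxw, ← Nat.card_eq_fintype_card] at hheavy
  have hw : (univ.sup fun y => (G.branch w y).ncard) < (G.branch v w).ncard :=
    (Finset.sup_lt_iff (show 0 < _ by omega)).2 fun y _ =>
      hG.ncard_branch_lt_of_adj hadj hheavy y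
  have hwv := le_sup (f := fun y => (G.branch v y).ncard) (mem_univ w)
  have hvw := hmin w (mem_univ w)
  omega

theorem IsTree.exists_forall_two_mul_ncard_supp_induce_le [Fintype V] (hG : G.IsTree) :
    ∃ v, ∀ c : (G.induce {u | u ≠ v}).ConnectedComponent,
      2 * c.supp.ncard ≤ Fintype.card V := by
  obtain ⟨v, hv⟩ := hG.exists_forall_two_mul_ncard_branch_le
  refine ⟨v, fun c => c.ind fun ⟨x, hx⟩ => ?_⟩
  rw [← Set.ncard_image_of_injective _ Subtype.val_injective,
    image_val_supp_induce_eq_branch hx]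
  exact hv x

end SimpleGraph

namespace Finset

variable {α : Type*} {s : Finset α} {w : α → ℕ}

lemma exists_subset_le_sum_le_add {b m : ℕ} (hw : ∀ a ∈ s, w a ≤ b)
    (hm : m ≤ ∑ a ∈ s, w a) : ∃ t ⊆ s, m ≤ ∑ a ∈ t, w a ∧ ∑ a ∈ t, w a ≤ m + b := by
  classical
  induction s using Finset.induction_on with
  | empty => exact ⟨∅, subset_rfl, hm, by simp⟩
  | @insert a s ha ih =>
    by_cases hs : m ≤ ∑ x ∈ s, w x
    · obtain ⟨t, hts, ht⟩ := ih (fun x hx => hw x (mem_insert_of_mem hx)) hs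
      exact ⟨t, hts.trans (subset_insert _ _), ht⟩
    · refine ⟨insert a s, subset_rfl, hm, ?_⟩
      rw [sum_insert ha]
      have := hw a (mem_insert_self a s)
      omega

lemma exists_subset_div_three_le_sum_le {n : ℕ} (hsum : ∑ a ∈ s, w a = n)
    (hw : ∀ a ∈ s, 2 * w a ≤ n + 1) :
    ∃ t ⊆ s, n / 3 ≤ ∑ a ∈ t, w a ∧ ∑ a ∈ t, w a ≤ (2 * n + 2) / 3 := by
  by_cases hbig : ∃ a ∈ s, n / 3 ≤ w a
  · obtain ⟨a, ha, hle⟩ := hbig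
    have := hw a ha
    exact ⟨{a}, singleton_subset_iff.2 ha, by rwa [sum_singleton], by rw [sum_singleton]; omega⟩
  · push Not at hbig
    have hsmall : ∀ a ∈ s, w a ≤ n / 3 - 1 := fun a ha => by have := hbig a ha; omega
    obtain ⟨t, hts, hlo, hhi⟩ := exists_subset_le_sum_le_add hsmall (m := n / 3)
      (hsum ▸ Nat.div_le_self n 3)
    exact ⟨t, hts, hlo, by omega⟩

end Finset

lemma Set.ncard_setOf_mem_finset {α β : Type*} [Finite α] (f : α → β) (t : Finset β) :
    {a | f a ∈ (t : Set β)}.ncard = ∑ b ∈ t, {a | f a = b}.ncard := by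
  classical
  induction t using Finset.induction_on with
  | empty => simp
  | insert b t hb ih =>
    have hsplit : {a | f a ∈ ((insert b t : Finset β) : Set β)} =
        {a | f a = b} ∪ {a | f a ∈ (t : Set β)} := by
      ext; simp
    have hdisj : Disjoint {a | f a = b} {a | f a ∈ (t : Set β)} :=
      Set.disjoint_left.2 fun a ha hat => hb (by simp_all)
    rw [hsplit, Set.ncard_union_eq hdisj, ih, Finset.sum_insert hb]

theorem tree_separator_general
    {V : Type*} [Fintype V]
    (G : SimpleGraph V) [DecidableRel G.Adj] (hG : G.IsTree)
    (n : ℕ) (hn : n = G.edgeFinset.card) :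
    ∃ v : V,
      ∃ S : Set ((G.induce {u : V | u ≠ v}).ConnectedComponent),
        n / 3 ≤
            {u : {u : V // u ≠ v} |
              (G.induce {u : V | u ≠ v}).connectedComponentMk u ∈ S}.ncard ∧
        {u : {u : V // u ≠ v} |
              (G.induce {u : V | u ≠ v}).connectedComponentMk u ∈ S}.ncard ≤
            (2 * n + 2) / 3 := by
  classical
  obtain ⟨v, hv⟩ := hG.exists_forall_two_mul_ncard_supp_induce_le
  have hcomponents (S : Finset (G.induce {u : V | u ≠ v}).ConnectedComponent) :
      {u : {u : V // u ≠ v} |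
        (G.induce {u : V | u ≠ v}).connectedComponentMk u ∈ (S : Set _)}.ncard =
        ∑ c ∈ S, c.supp.ncard :=
    Set.ncard_setOf_mem_finset _ S
  have hcard : Fintype.card V = n + 1 := hn ▸ hG.card_edgeFinset.symm
  have hsum : ∑ c : (G.induce {u : V | u ≠ v}).ConnectedComponent, c.supp.ncard = n := by
    rw [← hcomponents, coe_univ]
    simp only [ne_eq, Set.mem_univ, Set.ofPred_true, Set.ncard_univ, Nat.card_eq_fintype_card,
      Fintype.card_subtype_compl, Fintype.card_unique]
    omega
  obtain ⟨S, -, hS⟩ := exists_subset_div_three_le_sum_le hsum fun c _ => hcard ▸ hv c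
  exact ⟨v, S, by rwa [hcomponents]⟩

/-- Proposition 2, separator theorem for trees.
Every finite tree `T` with `n` edges has a vertex `v` such that some subset `S` of
the connected components of `T - v` covers a total number of vertices between
`⌊n/3⌋` and `⌈2n/3⌉`. -/
theorem tree_separator
    {V : Type*} [Fintype V] [DecidableEq V]
    (G : SimpleGraph V) [DecidableRel G.Adj] (hG : G.IsTree)
    (n : ℕ) (hn : n = G.edgeFinset.card) :
    ∃ v : V,
      ∃ S : Set ((G.induce {u : V | u ≠ v}).ConnectedComponent),
        n / 3 ≤
            {u : {u : V // u ≠ v} |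
              (G.induce {u : V | u ≠ v}).connectedComponentMk u ∈ S}.ncard ∧
        {u : {u : V // u ≠ v} |
              (G.induce {u : V | u ≠ v}).connectedComponentMk u ∈ S}.ncard ≤
            (2 * n + 2) / 3 :=
  tree_separator_general G hG n hn
end

section
/- Let C be a finite set with at least two elements, let Opt be a finite set, and for each I ∈ Opt let p₁(I), p₂(I) ≥ 0 be reals and α(I), β(I) ∈ C with α(I) ≠ β(I). Let X be a random subset of C obtained by including each element of C independently with probability 1/2. For each I ∈ Opt, set c(I) = α(I) and c̄(I) = β(I) if p₁(I) ≥ p₂(I), and c(I) = β(I), c̄(I) = α(I) otherwise. Then E[ Σ_{I ∈ Opt : c(I) ∈ X and c̄(I) ∉ X} max(p₁(I), p₂(I)) ] ≥ (1/8) · Σ_{I ∈ Opt} (p₁(I) + p₂(I)). -/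
/-! A path `I` is cut in the right direction exactly when `c I ∈ X` and `cbar I ∉ X`. Since
`c I ≠ cbar I`, a quarter of all subsets `X` do this, so by linearity of expectation the
average is `(1/4) ∑ max (p₁ I) (p₂ I)`, which is at least `(1/8) ∑ (p₁ I + p₂ I)`. -/

open Finset

namespace Finset

variable {α ι M : Type*}

theorem sum_sum_filter_eq_sum_card_smul [AddCommMonoid M] (s : Finset α) (t : Finset ι)
    (p : α → ι → Prop) [∀ x y, Decidable (p x y)] (f : ι → M) :
    ∑ x ∈ s, ∑ y ∈ t.filter (p x), f y = ∑ y ∈ t, #{x ∈ s | p x y} • f y := by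
  rw [sum_comm' (t' := t) (s' := fun y => s.filter (p · y))
    (fun x y => by simp only [mem_filter]; tauto)]
  simp only [sum_const]

variable [DecidableEq α]

theorem card_powerset_filter_mem_and_notMem {s : Finset α} {a b : α} (ha : a ∈ s) (hb : b ∈ s)
    (hab : a ≠ b) : 4 * #{X ∈ s.powerset | a ∈ X ∧ b ∉ X} = 2 ^ #s := by
  have hbij : #{X ∈ s.powerset | a ∈ X ∧ b ∉ X} = #((s.erase a).erase b).powerset := by
    refine card_bij' (fun X _ => X.erase a) (fun Y _ => insert a Y) ?_ ?_ ?_ ?_ <;>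
      simp only [mem_filter, mem_powerset, subset_iff, mem_erase, mem_insert] <;> grind
  obtain ⟨k, hk⟩ := Nat.exists_eq_add_of_le' (one_lt_card.2 ⟨a, ha, b, hb, hab⟩)
  rw [hbij, card_powerset, card_erase_of_mem (mem_erase.2 ⟨hab.symm, hb⟩),
    card_erase_of_mem ha, show #s - 1 - 1 = k by omega, hk, pow_add]
  ring

end Finset

theorem randomized_cut_expectation_general
    {ι C : Type*} [Fintype C] [DecidableEq C]
    (Opt : Finset ι) (p₁ p₂ : ι → ℝ)
    (α β : ι → C) (hαβ : ∀ I ∈ Opt, α I ≠ β I)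
    (c cbar : ι → C)
    (hc : ∀ I, c I = if p₂ I ≤ p₁ I then α I else β I)
    (hcbar : ∀ I, cbar I = if p₂ I ≤ p₁ I then β I else α I) :
    (1 / 8 : ℝ) * ∑ I ∈ Opt, (p₁ I + p₂ I) ≤
      (1 / 2 : ℝ) ^ (Fintype.card C) *
        ∑ X ∈ (Finset.univ : Finset C).powerset,
          ∑ I ∈ Opt.filter (fun I => c I ∈ X ∧ cbar I ∉ X),
            max (p₁ I) (p₂ I) := by
  rw [sum_sum_filter_eq_sum_card_smul, mul_sum, mul_sum]
  refine sum_le_sum fun I hI => ?_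
  have hne : c I ≠ cbar I := by
    rw [hc, hcbar]
    split_ifs
    exacts [hαβ I hI, (hαβ I hI).symm]
  have hcount : (4 : ℝ) * #{X ∈ univ.powerset | c I ∈ X ∧ cbar I ∉ X} =
      2 ^ Fintype.card C := by
    exact_mod_cast card_powerset_filter_mem_and_notMem (mem_univ _) (mem_univ _) hne
  have hquarter : (1 / 2 : ℝ) ^ Fintype.card C *
      #{X ∈ univ.powerset | c I ∈ X ∧ cbar I ∉ X} = 1 / 4 := by
    have hinv : (1 / 2 : ℝ) ^ Fintype.card C * 2 ^ Fintype.card C = 1 := by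
      rw [← mul_pow]; norm_num
    linear_combination (1 / 2 : ℝ) ^ Fintype.card C / 4 * hcount + hinv / 4
  rw [nsmul_eq_mul, ← mul_assoc, hquarter]
  linarith [le_max_left (p₁ I) (p₂ I), le_max_right (p₁ I) (p₂ I)]

/-- probabilistic core of the randomized-cut step of Theorem 5.
`C` is a finite set with at least two elements; for each `I` in the finite set `Opt`
we have values `p₁ I, p₂ I ≥ 0` and distinct elements `α I ≠ β I` of `C`.  With
`c I` the element corresponding to the larger value and `cbar I` the other one,
the expectation over a uniformly random subset `X ⊆ C` (each element kept
independently with probability `1/2`) of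
`∑_{I ∈ Opt, c I ∈ X, cbar I ∉ X} max (p₁ I) (p₂ I)` is at least
`(1/8) ∑_{I ∈ Opt} (p₁ I + p₂ I)`.  The expectation is written as the average
over all `2^|C|` subsets `X` of `C`. -/
theorem randomized_cut_expectation
    {ι C : Type*} [Fintype C] [DecidableEq C] (hC : 2 ≤ Fintype.card C)
    (Opt : Finset ι) (p₁ p₂ : ι → ℝ)
    (hp₁ : ∀ I ∈ Opt, 0 ≤ p₁ I) (hp₂ : ∀ I ∈ Opt, 0 ≤ p₂ I)
    (α β : ι → C) (hαβ : ∀ I ∈ Opt, α I ≠ β I)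
    (c cbar : ι → C)
    (hc : ∀ I, c I = if p₂ I ≤ p₁ I then α I else β I)
    (hcbar : ∀ I, cbar I = if p₂ I ≤ p₁ I then β I else α I) :
    (1 / 8 : ℝ) * ∑ I ∈ Opt, (p₁ I + p₂ I) ≤
      (1 / 2 : ℝ) ^ (Fintype.card C) *
        ∑ X ∈ (Finset.univ : Finset C).powerset,
          ∑ I ∈ Opt.filter (fun I => c I ∈ X ∧ cbar I ∉ X),
            max (p₁ I) (p₂ I) :=
  randomized_cut_expectation_general Opt p₁ p₂ α β hαβ c cbar hc hcbar
end

section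
/- Let T be a finite tree rooted at a vertex r, with n edges, and let P₁, …, P_m be paths in T (each connecting two vertices of T). Suppose that for every vertex v ≠ r of T, either some P_j has an endpoint at v, or some P_j contains two distinct children of v. Then n ≤ 3m. -/
/-!
Charge every vertex `v ≠ r` to a path `P j` having `v` as its source, its target, or its apex,
the vertex with two distinct children on `P j`. A path has at most one apex: the apex lies on
the path, and a path of a tree that steps down to a child never climbs again, because parents
are unique; so every other vertex of the path is strictly deeper than the apex. Thus the
`n = |V| - 1` non-root vertices are covered by at most `3m` roles.
-/

open Finset

namespace SimpleGraph

variable {V : Type*} {G : SimpleGraph V}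

def IsChild (G : SimpleGraph V) (r v w : V) : Prop :=
  G.Adj v w ∧ G.dist r w = G.dist r v + 1

def IsApex (G : SimpleGraph V) (r : V) {a b : V} (p : G.Walk a b) (v : V) : Prop :=
  ∃ w₁ w₂, w₁ ≠ w₂ ∧ G.IsChild r v w₁ ∧ G.IsChild r v w₂ ∧ w₁ ∈ p.support ∧ w₂ ∈ p.support

lemma Walk.exists_isPath_support_subset {a b x y : V} (p : G.Walk a b) (hx : x ∈ p.support)
    (hy : y ∈ p.support) : ∃ q : G.Walk x y, q.IsPath ∧ q.support ⊆ p.support := by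
  classical
  refine ⟨((p.takeUntil x hx).reverse.append (p.takeUntil y hy)).bypass, bypass_isPath _,
    fun z hz => ?_⟩
  replace hz := support_bypass_subset_support _ hz
  rw [support_append, List.mem_append, support_reverse, List.mem_reverse] at hz
  rcases hz with hz | hz
  · exact p.support_takeUntil_subset_support hx hz
  · exact p.support_takeUntil_subset_support hy (List.mem_of_mem_tail hz)

namespace IsTree

lemma length_eq_dist (hG : G.IsTree) {u v : V} {p : G.Walk u v} (hp : p.IsPath) :
    p.length = G.dist u v := by
  obtain ⟨q, hq, hql⟩ := hG.connected.exists_path_of_dist u v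
  rw [(hG.existsUnique_path u v).unique hp hq, hql]

lemma dist_eq_add_of_mem_support (hG : G.IsTree) {u v x : V} {p : G.Walk u v} (hp : p.IsPath)
    (hx : x ∈ p.support) : G.dist u v = G.dist u x + G.dist x v := by
  classical
  rw [← hG.length_eq_dist hp, ← hG.length_eq_dist (hp.takeUntil hx),
    ← hG.length_eq_dist (hp.dropUntil hx), ← Walk.length_append, Walk.take_spec]

lemma isChild_of_mem_support (hG : G.IsTree) {r v w : V} (hadj : G.Adj v w) {q : G.Walk w r}
    (hq : q.IsPath) (hv : v ∈ q.support) : G.IsChild r v w := by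
  refine ⟨hadj, ?_⟩
  rw [dist_comm, hG.dist_eq_add_of_mem_support hq hv, dist_eq_one_iff_adj.2 hadj.symm, dist_comm,
    add_comm]

lemma mem_support_of_isChild (hG : G.IsTree) {r v c : V} (hc : G.IsChild r v c)
    {p : G.Walk r c} (hp : p.IsPath) : v ∈ p.support := by
  obtain ⟨q, hq, -⟩ := hG.connected.exists_path_of_dist r v
  refine hG.isAcyclic.mem_support_of_ne_mem_support_of_adj_of_isPath hp hq hc.1.symm fun hcq => ?_
  have := hG.dist_eq_add_of_mem_support hq hcq
  have := hc.2
  omega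

lemma eq_of_isChild (hG : G.IsTree) {r v v' c : V} (h : G.IsChild r v c)
    (h' : G.IsChild r v' c) : v = v' := by
  obtain ⟨p, hp, -⟩ := hG.connected.exists_path_of_dist r c
  rw [hG.isAcyclic.eq_penultimate_of_adj_end hp h.1.symm (hG.mem_support_of_isChild h hp),
    hG.isAcyclic.eq_penultimate_of_adj_end hp h'.1.symm (hG.mem_support_of_isChild h' hp)]

lemma dist_eq_add_length_of_isPath_cons (hG : G.IsTree) {r v c x : V} (hc : G.IsChild r v c)
    (Q : G.Walk c x) (hp : (Q.cons hc.1).IsPath) : G.dist r x = G.dist r v + 1 + Q.length := by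
  induction Q generalizing v with
  | nil => simpa using hc.2
  | @cons c c' x h Q ih =>
    rw [Walk.cons_isPath_iff] at hp
    rcases hG.dist_eq_dist_add_one_of_adj r h with hdown | hup
    · -- `c'` would be a second parent of `c`
      refine absurd ?_ hp.2
      rw [hG.eq_of_isChild hc ⟨h.symm, hdown⟩]
      simp
    · have := ih ⟨h, hup⟩ hp.1
      have := hc.2
      rw [Walk.length_cons]
      omega

lemma dist_lt_of_isChild_mem_support (hG : G.IsTree) {r v x c u : V} {p : G.Walk v x}
    (hp : p.IsPath) (hc : G.IsChild r v c) (hcp : c ∈ p.support) (hu : u ∈ p.support)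
    (huv : u ≠ v) : G.dist r v < G.dist r u := by
  classical
  cases p with
  | nil => exact absurd (Walk.mem_support_nil_iff.1 hu) huv
  | cons h Q =>
    have hsnd := hG.isAcyclic.eq_snd_of_adj_start hp hc.1 hcp
    rw [Walk.snd_cons] at hsnd
    subst hsnd
    rw [Walk.cons_isPath_iff] at hp
    have huQ : u ∈ Q.support := by simpa [huv] using hu
    have hpath : ((Q.takeUntil u huQ).cons hc.1).IsPath :=
      (hp.1.takeUntil huQ).cons fun hv => hp.2 (Q.support_takeUntil_subset_support huQ hv)
    have := hG.dist_eq_add_length_of_isPath_cons hc _ hpath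
    omega

lemma mem_support_of_adj_of_adj (hG : G.IsTree) {a b w₁ v w₂ : V} {p : G.Walk a b}
    (h₁ : G.Adj w₁ v) (h₂ : G.Adj v w₂) (hne : w₁ ≠ w₂) (hw₁ : w₁ ∈ p.support)
    (hw₂ : w₂ ∈ p.support) : v ∈ p.support := by
  obtain ⟨q, hq, hqp⟩ := p.exists_isPath_support_subset hw₁ hw₂
  have hpath : (Walk.cons h₁ (Walk.cons h₂ .nil)).IsPath := by
    simp [h₁.ne, h₂.ne, hne]
  rw [(hG.existsUnique_path w₁ w₂).unique hq hpath] at hqp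
  exact hqp (by simp)

lemma mem_support_of_isApex (hG : G.IsTree) {r a b v : V} {p : G.Walk a b}
    (hv : G.IsApex r p v) : v ∈ p.support :=
  let ⟨_, _, hne, h₁, h₂, hw₁, hw₂⟩ := hv
  hG.mem_support_of_adj_of_adj h₁.1.symm h₂.1 hne hw₁ hw₂

lemma dist_lt_of_mem_support_of_children (hG : G.IsTree) {r v x y w₁ w₂ u : V}
    {X : G.Walk v x} {Y : G.Walk v y} (hX : X.IsPath) (hY : Y.IsPath) (hne : w₁ ≠ w₂)
    (h₁ : G.IsChild r v w₁) (h₂ : G.IsChild r v w₂) (hw₁ : w₁ ∈ X.support ∨ w₁ ∈ Y.support)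
    (hw₂ : w₂ ∈ X.support ∨ w₂ ∈ Y.support) (hu : u ∈ X.support) (huv : u ≠ v) :
    G.dist r v < G.dist r u := by
  rcases hw₁ with hw₁ | hw₁
  · exact hG.dist_lt_of_isChild_mem_support hX h₁ hw₁ hu huv
  rcases hw₂ with hw₂ | hw₂
  · exact hG.dist_lt_of_isChild_mem_support hX h₂ hw₂ hu huv
  -- otherwise both children would be the second vertex of `Y`
  exact absurd ((hG.isAcyclic.eq_snd_of_adj_start hY h₁.1 hw₁).trans
    (hG.isAcyclic.eq_snd_of_adj_start hY h₂.1 hw₂).symm) hne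

lemma dist_lt_of_isApex (hG : G.IsTree) {r a b v u : V} {p : G.Walk a b} (hp : p.IsPath)
    (hv : G.IsApex r p v) (hu : u ∈ p.support) (huv : u ≠ v) : G.dist r v < G.dist r u := by
  classical
  have hvp := hG.mem_support_of_isApex hv
  obtain ⟨w₁, w₂, hne, h₁, h₂, hw₁, hw₂⟩ := hv
  have hA : (p.takeUntil v hvp).reverse.IsPath := (hp.takeUntil hvp).reverse
  have hB : (p.dropUntil v hvp).IsPath := hp.dropUntil hvp
  have hsplit : ∀ z ∈ p.support,
      z ∈ (p.takeUntil v hvp).reverse.support ∨ z ∈ (p.dropUntil v hvp).support := by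
    intro z hz
    rw [← p.take_spec hvp, Walk.mem_support_append_iff] at hz
    simpa using hz
  rcases hsplit u hu with hu | hu
  · exact hG.dist_lt_of_mem_support_of_children hA hB hne h₁ h₂ (hsplit _ hw₁) (hsplit _ hw₂)
      hu huv
  · exact hG.dist_lt_of_mem_support_of_children hB hA hne h₁ h₂ (hsplit _ hw₁).symm
      (hsplit _ hw₂).symm hu huv

lemma isApex_subsingleton (hG : G.IsTree) {r a b : V} {p : G.Walk a b} (hp : p.IsPath) :
    {v | G.IsApex r p v}.Subsingleton := by
  intro v hv v' hv'
  by_contra hne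
  have := hG.dist_lt_of_isApex hp hv (hG.mem_support_of_isApex hv') (Ne.symm hne)
  have := hG.dist_lt_of_isApex hp hv' (hG.mem_support_of_isApex hv) hne
  omega

end IsTree

end SimpleGraph

open SimpleGraph

theorem tree_edges_le_three_mul_paths_general
    {V : Type*} [Fintype V]
    (G : SimpleGraph V) [DecidableRel G.Adj] (hG : G.IsTree) (r : V)
    (m : ℕ) (s t : Fin m → V)
    (P : ∀ j : Fin m, G.Walk (s j) (t j)) (hP : ∀ j, (P j).IsPath)
    (hcond : ∀ v : V, v ≠ r →
      (∃ j : Fin m, s j = v ∨ t j = v) ∨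
      (∃ (j : Fin m) (w₁ w₂ : V), w₁ ≠ w₂ ∧
        (G.Adj v w₁ ∧ ∃ q : G.Walk w₁ r, q.IsPath ∧ v ∈ q.support) ∧
        (G.Adj v w₂ ∧ ∃ q : G.Walk w₂ r, q.IsPath ∧ v ∈ q.support) ∧
        w₁ ∈ (P j).support ∧ w₂ ∈ (P j).support)) :
    G.edgeFinset.card ≤ 3 * m := by
  classical
  let roles : Fin m → Finset V := fun j => {s j, t j} ∪ ({v | G.IsApex r (P j) v} : Finset V)
  have hcover : univ.erase r ⊆ univ.biUnion roles := by
    intro v hv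
    simp only [roles, mem_biUnion, mem_univ, true_and, mem_union, mem_insert, mem_singleton,
      mem_filter]
    rcases hcond v (ne_of_mem_erase hv) with ⟨j, hj | hj⟩ |
      ⟨j, w₁, w₂, hne, ⟨h₁, _, hq₁, hv₁⟩, ⟨h₂, _, hq₂, hv₂⟩, hw₁, hw₂⟩
    · exact ⟨j, .inl (.inl hj.symm)⟩
    · exact ⟨j, .inl (.inr hj.symm)⟩
    · exact ⟨j, .inr ⟨w₁, w₂, hne, hG.isChild_of_mem_support h₁ hq₁ hv₁,
        hG.isChild_of_mem_support h₂ hq₂ hv₂, hw₁, hw₂⟩⟩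
  have hroles (j : Fin m) : #(roles j) ≤ 3 :=
    (card_union_le _ _).trans <| add_le_add card_le_two <| card_le_one.2 fun _ ha _ hb =>
      hG.isApex_subsingleton (hP j) (mem_filter.1 ha).2 (mem_filter.1 hb).2
  calc #G.edgeFinset = #(univ.erase r) := by
        rw [card_erase_of_mem (mem_univ r), card_univ, ← hG.card_edgeFinset]; rfl
    _ ≤ ∑ j, #(roles j) := (card_le_card hcover).trans card_biUnion_le
    _ ≤ ∑ _j : Fin m, 3 := sum_le_sum fun j _ => hroles j
    _ = 3 * m := by simp [mul_comm]

/-- the structural claim justifying `n ≤ 3m`.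
Let `T` be a finite tree with `n` edges rooted at `r`, and let `P 1, …, P m` be paths
in `T`.  A vertex `w` is a child of `v` if `w` is adjacent to `v` and `v` lies on the
path from `w` to `r`.  If every vertex `v ≠ r` is either an endpoint of some path
`P j`, or some path `P j` contains two distinct children of `v`, then `n ≤ 3m`. -/
theorem tree_edges_le_three_mul_paths
    {V : Type*} [Fintype V] [DecidableEq V]
    (G : SimpleGraph V) [DecidableRel G.Adj] (hG : G.IsTree) (r : V)
    (m : ℕ) (s t : Fin m → V)
    (P : ∀ j : Fin m, G.Walk (s j) (t j)) (hP : ∀ j, (P j).IsPath)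
    (hcond : ∀ v : V, v ≠ r →
      (∃ j : Fin m, s j = v ∨ t j = v) ∨
      (∃ (j : Fin m) (w₁ w₂ : V), w₁ ≠ w₂ ∧
        (G.Adj v w₁ ∧ ∃ q : G.Walk w₁ r, q.IsPath ∧ v ∈ q.support) ∧
        (G.Adj v w₂ ∧ ∃ q : G.Walk w₂ r, q.IsPath ∧ v ∈ q.support) ∧
        w₁ ∈ (P j).support ∧ w₂ ∈ (P j).support)) :
    G.edgeFinset.card ≤ 3 * m :=
  tree_edges_le_three_mul_paths_general G hG r m s t P hP hcond
end

section
/- For every pricing p of the basic gadget, the profit is at most 18; moreover, the profit equals 18 if and only if (p(e₁), p(e₂), p(e₃), p(e₄)) = (1, 2, 2, 1) or (p(e₁), p(e₂), p(e₃), p(e₄)) = (2, 1, 1, 2). -/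
/-- A single-minded customer with bundle price `x` and budget `B` pays `x` if
`x ≤ B` and `0` otherwise. -/
noncomputable def pay (x B : ℝ) : ℝ := if x ≤ B then x else 0

/-- The profit of a pricing `p` of the four items `e₁, e₂, e₃, e₄` of the basic
gadget: customers `a₁,…,a₄` with bundles `{e₁},…,{e₄}` and budgets `1,2,2,1`;
customers `b₁,…,b₄` with the same bundles and budgets `2,1,1,2`; customers `c₁`
with bundle `{e₁,e₂}` and `c₂` with bundle `{e₃,e₄}`, both of budget `3`;
customers `d₁, d₂` with bundle `{e₂,e₃}` and budgets `4` and `2`. -/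
noncomputable def basicProfit (p : Fin 4 → ℝ) : ℝ :=
  pay (p 0) 1 + pay (p 1) 2 + pay (p 2) 2 + pay (p 3) 1 +
  pay (p 0) 2 + pay (p 1) 1 + pay (p 2) 1 + pay (p 3) 2 +
  pay (p 0 + p 1) 3 + pay (p 2 + p 3) 3 +
  pay (p 1 + p 2) 4 + pay (p 1 + p 2) 2

/-!
Group the twelve customers by the items they see. Each outer item `e₁`, `e₄` is wanted by
two customers with budgets `1` and `2`, so it earns at most `2`, and only at price `1` or `2`;
each budget-`3` bundle earns at most `3`, and only at price exactly `3`. The middle items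
`e₂, e₃` together with the bundle `{e₂, e₃}` earn at most `8`: the bundle pays `2s` for
`s = p e₂ + p e₃ ≤ 2` and `s ≤ 4` otherwise, so equality forces `(1, 1)` or `(2, 2)`.
Hence `18 = 2 + 2 + 8 + 3 + 3`, and the bundles `{e₁, e₂}`, `{e₃, e₄}` at price `3` then
pin down the outer prices.
-/

lemma pay_of_le {x B : ℝ} (h : x ≤ B) : pay x B = x := if_pos h

lemma pay_of_lt {x B : ℝ} (h : B < x) : pay x B = 0 := if_neg (not_le.2 h)

lemma pay_le_budget (x : ℝ) {B : ℝ} (hB : 0 ≤ B) : pay x B ≤ B := by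
  unfold pay
  split_ifs <;> assumption

lemma pay_eq_budget_iff (x : ℝ) {B : ℝ} (hB : 0 < B) : pay x B = B ↔ x = B := by
  unfold pay
  split_ifs <;> constructor <;> intro h <;> linarith

section TwoBudgets

variable (x : ℝ) {a b : ℝ}

lemma pay_add_pay_le_of_eq_two_mul (ha : 0 ≤ a) (hb : b = 2 * a) :
    pay x a + pay x b ≤ b := by
  subst hb
  unfold pay
  split_ifs <;> linarith

lemma pay_add_pay_eq_iff_of_eq_two_mul (ha : 0 < a) (hb : b = 2 * a) :
    pay x a + pay x b = b ↔ x = a ∨ x = b := by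
  subst hb
  unfold pay
  split_ifs <;> constructor <;> intro h <;>
    first
      | (left; linarith) | (right; linarith) | (exfalso; linarith)
      | (rcases h with h | h <;> linarith)

end TwoBudgets

section Middle

variable (y z : ℝ) {a : ℝ}

lemma pay_two_items_add_bundle_le (ha : 0 < a) :
    pay y a + pay y (2 * a) + pay z a + pay z (2 * a) +
      pay (y + z) (2 * a) + pay (y + z) (4 * a) ≤ 8 * a := by
  have hy := pay_add_pay_le_of_eq_two_mul y ha.le rfl
  have hz := pay_add_pay_le_of_eq_two_mul z ha.le rfl
  rcases le_or_gt (y + z) (2 * a) with hs | hs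
  · rw [pay_of_le hs, pay_of_le (by linarith : y + z ≤ 4 * a)]
    linarith
  · rw [pay_of_lt hs]
    linarith [pay_le_budget (y + z) (by linarith : 0 ≤ 4 * a)]

lemma pay_two_items_add_bundle_eq_iff (ha : 0 < a) :
    pay y a + pay y (2 * a) + pay z a + pay z (2 * a) +
        pay (y + z) (2 * a) + pay (y + z) (4 * a) = 8 * a ↔
      (y = a ∧ z = a) ∨ (y = 2 * a ∧ z = 2 * a) := by
  have hy := pay_add_pay_le_of_eq_two_mul y ha.le rfl
  have hz := pay_add_pay_le_of_eq_two_mul z ha.le rfl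
  have hy_iff := pay_add_pay_eq_iff_of_eq_two_mul y ha rfl
  have hz_iff := pay_add_pay_eq_iff_of_eq_two_mul z ha rfl
  constructor
  · intro h
    rcases le_or_gt (y + z) (2 * a) with hs | hs
    · rw [pay_of_le hs, pay_of_le (by linarith : y + z ≤ 4 * a)] at h
      left
      rcases hy_iff.1 (by linarith) with hy' | hy' <;>
        rcases hz_iff.1 (by linarith) with hz' | hz' <;> constructor <;> linarith
    · rw [pay_of_lt hs] at h
      have hbundle := pay_le_budget (y + z) (by linarith : 0 ≤ 4 * a)
      have hs4 : y + z = 4 * a := (pay_eq_budget_iff (y + z) (by linarith)).1 (by linarith)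
      right
      rcases hy_iff.1 (by linarith) with hy' | hy' <;>
        rcases hz_iff.1 (by linarith) with hz' | hz' <;> constructor <;> linarith
  · rintro (⟨hy', hz'⟩ | ⟨hy', hz'⟩) <;> subst y z
    · rw [pay_of_le (le_refl a), pay_of_le (by linarith : a ≤ 2 * a),
        pay_of_le (by linarith : a + a ≤ 2 * a), pay_of_le (by linarith : a + a ≤ 4 * a)]
      ring
    · rw [pay_of_lt (by linarith : a < 2 * a), pay_of_le (le_refl (2 * a)),
        pay_of_lt (by linarith : 2 * a < 2 * a + 2 * a),
        pay_of_le (by linarith : 2 * a + 2 * a ≤ 4 * a)]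
      ring

end Middle

theorem basic_gadget_profit_general (p : Fin 4 → ℝ) :
    basicProfit p ≤ 18 ∧
      (basicProfit p = 18 ↔
        (p 0 = 1 ∧ p 1 = 2 ∧ p 2 = 2 ∧ p 3 = 1) ∨
        (p 0 = 2 ∧ p 1 = 1 ∧ p 2 = 1 ∧ p 3 = 2)) := by
  have hsplit : basicProfit p =
      (pay (p 0) 1 + pay (p 0) 2) + (pay (p 3) 1 + pay (p 3) 2) +
      (pay (p 1) 1 + pay (p 1) 2 + pay (p 2) 1 + pay (p 2) 2 +
        pay (p 1 + p 2) 2 + pay (p 1 + p 2) 4) +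
      pay (p 0 + p 1) 3 + pay (p 2 + p 3) 3 := by
    unfold basicProfit; ring
  have hfirst := pay_add_pay_le_of_eq_two_mul (p 0) zero_le_one (mul_one 2).symm
  have hlast := pay_add_pay_le_of_eq_two_mul (p 3) zero_le_one (mul_one 2).symm
  have hmiddle := pay_two_items_add_bundle_le (p 1) (p 2) one_pos
  have hmiddle_iff := pay_two_items_add_bundle_eq_iff (p 1) (p 2) one_pos
  simp only [mul_one] at hmiddle hmiddle_iff
  have hleft := pay_le_budget (p 0 + p 1) (by norm_num : (0 : ℝ) ≤ 3)
  have hright := pay_le_budget (p 2 + p 3) (by norm_num : (0 : ℝ) ≤ 3)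
  rw [hsplit]
  refine ⟨by linarith, fun h => ?_, ?_⟩
  · have hleft_eq := (pay_eq_budget_iff (p 0 + p 1) three_pos).1 (by linarith)
    have hright_eq := (pay_eq_budget_iff (p 2 + p 3) three_pos).1 (by linarith)
    rcases hmiddle_iff.1 (by linarith) with ⟨h1, h2⟩ | ⟨h1, h2⟩
    · exact Or.inr ⟨by linarith, h1, h2, by linarith⟩
    · exact Or.inl ⟨by linarith, h1, h2, by linarith⟩
  · rintro (⟨h0, h1, h2, h3⟩ | ⟨h0, h1, h2, h3⟩) <;> rw [h0, h1, h2, h3] <;> norm_num [pay]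

/-- Lemma basegadget.
For every nonnegative pricing of the basic gadget the profit is at most `18`,
with equality iff the prices are `(1,2,2,1)` or `(2,1,1,2)`. -/
theorem basic_gadget_profit (p : Fin 4 → ℝ) (hp : ∀ i, 0 ≤ p i) :
    basicProfit p ≤ 18 ∧
      (basicProfit p = 18 ↔
        (p 0 = 1 ∧ p 1 = 2 ∧ p 2 = 2 ∧ p 3 = 1) ∨
        (p 0 = 2 ∧ p 1 = 1 ∧ p 2 = 1 ∧ p 3 = 2)) :=
  basic_gadget_profit_general p
end

section
/- Fix integers m, n ≥ 1, a truth assignment t : {1, …, n} → {TRUE, FALSE}, and indices 1 ≤ i, j ≤ n, and let p be the consistent pricing induced by t. Then: the total price of the bundle {e_{4i−3}, e_{4i−4}, …, e₁, h, f₁, …, f_{4j−3}} is at most mn² + 6(i+j−2) + 3 if and only if t(i) = TRUE or t(j) = TRUE; the total price of {e_{4i−1}, e_{4i−2}, …, e₁, h, f₁, …, f_{4j−3}} is at most mn² + 6(i+j−2) + 6 if and only if t(i) = FALSE or t(j) = TRUE; the total price of {e_{4i−3}, …, e₁, h, f₁, …, f_{4j−1}} is at most mn² + 6(i+j−2) +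 6 if and only if t(i) = TRUE or t(j) = FALSE; and the total price of {e_{4i−1}, …, e₁, h, f₁, …, f_{4j−1}} is at most mn² + 6(i+j−2) + 9 if and only if t(i) = FALSE or t(j) = FALSE. -/
/-!
Under a consistent pricing every full quadruple costs 6, while the first item of the
`k`-th quadruple costs `1` or `2` and its first three items cost `5` or `4`, according as
`t k` is true or false. So each bundle costs `mn² + 6(i + j - 2)` plus the two costs of the
partial quadruples at `i` and `j`, and this surplus exceeds the budget exactly when both
literals of the clause are false.
-/

open Finset

def IsAssignmentPricing (n : ℕ) (t : ℕ → Bool) (p : ℕ → ℝ) : Prop :=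
  ∀ k, 1 ≤ k → k ≤ n →
      if t k then
        p (4 * k - 3) = 1 ∧ p (4 * k - 2) = 2 ∧ p (4 * k - 1) = 2 ∧ p (4 * k) = 1
      else
        p (4 * k - 3) = 2 ∧ p (4 * k - 2) = 1 ∧ p (4 * k - 1) = 1 ∧ p (4 * k) = 2

theorem Finset.sum_Icc_one_four_mul_add_four {M : Type*} [AddCommMonoid M] (f : ℕ → M)
    (k : ℕ) :
    ∑ l ∈ Icc 1 (4 * k + 4), f l =
      ∑ l ∈ Icc 1 (4 * k), f l +
        (f (4 * k + 1) + f (4 * k + 2) + f (4 * k + 3) + f (4 * k + 4)) := by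
  rw [sum_Icc_succ_top (by omega), sum_Icc_succ_top (by omega), sum_Icc_succ_top (by omega),
    sum_Icc_succ_top (by omega)]
  simp only [add_assoc]

namespace IsAssignmentPricing

variable {n : ℕ} {t : ℕ → Bool} {p : ℕ → ℝ}

theorem quadruple_succ (hp : IsAssignmentPricing n t p) {k : ℕ} (hk : k < n) :
    p (4 * k + 1) = (if t (k + 1) then 1 else 2) ∧
      p (4 * k + 1) + p (4 * k + 2) + p (4 * k + 3) = (if t (k + 1) then 5 else 4) ∧
      p (4 * k + 4) = (if t (k + 1) then 1 else 2) := by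
  have h := hp (k + 1) (by omega) hk
  rw [show 4 * (k + 1) - 3 = 4 * k + 1 by omega, show 4 * (k + 1) - 2 = 4 * k + 2 by omega,
    show 4 * (k + 1) - 1 = 4 * k + 3 by omega, show 4 * (k + 1) = 4 * k + 4 by omega] at h
  split_ifs at h ⊢ <;> obtain ⟨h1, h2, h3, h4⟩ := h <;> norm_num [h1, h2, h3, h4]

theorem sum_Icc_four_mul (hp : IsAssignmentPricing n t p) {k : ℕ} (hk : k ≤ n) :
    ∑ l ∈ Icc 1 (4 * k), p l = 6 * k := by
  induction k with
  | zero => simp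
  | succ k ih =>
    obtain ⟨-, firstThree, last⟩ := hp.quadruple_succ hk
    rw [show 4 * (k + 1) = 4 * k + 4 by ring, sum_Icc_one_four_mul_add_four, ih (by omega),
      firstThree, last]
    split_ifs <;> push_cast <;> ring

theorem sum_Icc_four_mul_sub_three (hp : IsAssignmentPricing n t p) {k : ℕ}
    (hk₁ : 1 ≤ k) (hk₂ : k ≤ n) :
    ∑ l ∈ Icc 1 (4 * k - 3), p l = 6 * ((k : ℝ) - 1) + if t k then 1 else 2 := by
  obtain ⟨k, rfl⟩ := Nat.exists_eq_add_of_le' hk₁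
  rw [show 4 * (k + 1) - 3 = 4 * k + 1 by omega, sum_Icc_succ_top (by omega),
    hp.sum_Icc_four_mul (by omega), (hp.quadruple_succ hk₂).1]
  push_cast; ring

theorem sum_Icc_four_mul_sub_one (hp : IsAssignmentPricing n t p) {k : ℕ}
    (hk₁ : 1 ≤ k) (hk₂ : k ≤ n) :
    ∑ l ∈ Icc 1 (4 * k - 1), p l = 6 * ((k : ℝ) - 1) + if t k then 5 else 4 := by
  obtain ⟨k, rfl⟩ := Nat.exists_eq_add_of_le' hk₁
  rw [show 4 * (k + 1) - 1 = 4 * k + 3 by omega, sum_Icc_succ_top (by omega),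
    sum_Icc_succ_top (by omega), sum_Icc_succ_top (by omega),
    hp.sum_Icc_four_mul (by omega), ← (hp.quadruple_succ hk₂).2.1]
  push_cast; ring

end IsAssignmentPricing

theorem clause_gadget_general
    (m n : ℕ)
    (t : ℕ → Bool) (i j : ℕ) (hi1 : 1 ≤ i) (hi2 : i ≤ n) (hj1 : 1 ≤ j) (hj2 : j ≤ n)
    (pe pf : ℕ → ℝ) (ph : ℝ)
    (hpe : ∀ k, 1 ≤ k → k ≤ n →
      if t k then
        pe (4 * k - 3) = 1 ∧ pe (4 * k - 2) = 2 ∧ pe (4 * k - 1) = 2 ∧ pe (4 * k) = 1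
      else
        pe (4 * k - 3) = 2 ∧ pe (4 * k - 2) = 1 ∧ pe (4 * k - 1) = 1 ∧ pe (4 * k) = 2)
    (hpf : ∀ k, 1 ≤ k → k ≤ n →
      if t k then
        pf (4 * k - 3) = 1 ∧ pf (4 * k - 2) = 2 ∧ pf (4 * k - 1) = 2 ∧ pf (4 * k) = 1
      else
        pf (4 * k - 3) = 2 ∧ pf (4 * k - 2) = 1 ∧ pf (4 * k - 1) = 1 ∧ pf (4 * k) = 2)
    (hph : ph = (m : ℝ) * (n : ℝ) ^ 2) :
    ((∑ l ∈ Finset.Icc 1 (4 * i - 3), pe l) + ph + ∑ l ∈ Finset.Icc 1 (4 * j - 3), pf l ≤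
        (m : ℝ) * (n : ℝ) ^ 2 + 6 * ((i : ℝ) + (j : ℝ) - 2) + 3 ↔
      t i = true ∨ t j = true) ∧
    ((∑ l ∈ Finset.Icc 1 (4 * i - 1), pe l) + ph + ∑ l ∈ Finset.Icc 1 (4 * j - 3), pf l ≤
        (m : ℝ) * (n : ℝ) ^ 2 + 6 * ((i : ℝ) + (j : ℝ) - 2) + 6 ↔
      t i = false ∨ t j = true) ∧
    ((∑ l ∈ Finset.Icc 1 (4 * i - 3), pe l) + ph + ∑ l ∈ Finset.Icc 1 (4 * j - 1), pf l ≤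
        (m : ℝ) * (n : ℝ) ^ 2 + 6 * ((i : ℝ) + (j : ℝ) - 2) + 6 ↔
      t i = true ∨ t j = false) ∧
    ((∑ l ∈ Finset.Icc 1 (4 * i - 1), pe l) + ph + ∑ l ∈ Finset.Icc 1 (4 * j - 1), pf l ≤
        (m : ℝ) * (n : ℝ) ^ 2 + 6 * ((i : ℝ) + (j : ℝ) - 2) + 9 ↔
      t i = false ∨ t j = false) := by
  have hpe : IsAssignmentPricing n t pe := hpe
  have hpf : IsAssignmentPricing n t pf := hpf
  rw [hpe.sum_Icc_four_mul_sub_three hi1 hi2, hpe.sum_Icc_four_mul_sub_one hi1 hi2,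
    hpf.sum_Icc_four_mul_sub_three hj1 hj2, hpf.sum_Icc_four_mul_sub_one hj1 hj2, hph]
  refine ⟨?_, ?_, ?_, ?_⟩ <;> cases t i <;> cases t j <;> norm_num <;> linarith

/-- Lemma clause.
Let `p` be the consistent pricing induced by the truth assignment
`t : {1,…,n} → Bool`: for each `k`, the quadruples
`(e_{4k-3}, e_{4k-2}, e_{4k-1}, e_{4k})` and `(f_{4k-3}, f_{4k-2}, f_{4k-1}, f_{4k})`
are priced `(1,2,2,1)` if `t k = true` and `(2,1,1,2)` if `t k = false`, and
`p(h) = mn²`.  Then each of the four clause customers can afford her bundle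
iff the truth assignment satisfies the corresponding clause. -/
theorem clause_gadget
    (m n : ℕ) (hm : 1 ≤ m) (hn : 1 ≤ n)
    (t : ℕ → Bool) (i j : ℕ) (hi1 : 1 ≤ i) (hi2 : i ≤ n) (hj1 : 1 ≤ j) (hj2 : j ≤ n)
    (pe pf : ℕ → ℝ) (ph : ℝ)
    (hpe : ∀ k, 1 ≤ k → k ≤ n →
      if t k then
        pe (4 * k - 3) = 1 ∧ pe (4 * k - 2) = 2 ∧ pe (4 * k - 1) = 2 ∧ pe (4 * k) = 1
      else
        pe (4 * k - 3) = 2 ∧ pe (4 * k - 2) = 1 ∧ pe (4 * k - 1) = 1 ∧ pe (4 * k) = 2)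
    (hpf : ∀ k, 1 ≤ k → k ≤ n →
      if t k then
        pf (4 * k - 3) = 1 ∧ pf (4 * k - 2) = 2 ∧ pf (4 * k - 1) = 2 ∧ pf (4 * k) = 1
      else
        pf (4 * k - 3) = 2 ∧ pf (4 * k - 2) = 1 ∧ pf (4 * k - 1) = 1 ∧ pf (4 * k) = 2)
    (hph : ph = (m : ℝ) * (n : ℝ) ^ 2) :
    ((∑ l ∈ Finset.Icc 1 (4 * i - 3), pe l) + ph + ∑ l ∈ Finset.Icc 1 (4 * j - 3), pf l ≤
        (m : ℝ) * (n : ℝ) ^ 2 + 6 * ((i : ℝ) + (j : ℝ) - 2) + 3 ↔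
      t i = true ∨ t j = true) ∧
    ((∑ l ∈ Finset.Icc 1 (4 * i - 1), pe l) + ph + ∑ l ∈ Finset.Icc 1 (4 * j - 3), pf l ≤
        (m : ℝ) * (n : ℝ) ^ 2 + 6 * ((i : ℝ) + (j : ℝ) - 2) + 6 ↔
      t i = false ∨ t j = true) ∧
    ((∑ l ∈ Finset.Icc 1 (4 * i - 3), pe l) + ph + ∑ l ∈ Finset.Icc 1 (4 * j - 1), pf l ≤
        (m : ℝ) * (n : ℝ) ^ 2 + 6 * ((i : ℝ) + (j : ℝ) - 2) + 6 ↔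
      t i = true ∨ t j = false) ∧
    ((∑ l ∈ Finset.Icc 1 (4 * i - 1), pe l) + ph + ∑ l ∈ Finset.Icc 1 (4 * j - 1), pf l ≤
        (m : ℝ) * (n : ℝ) ^ 2 + 6 * ((i : ℝ) + (j : ℝ) - 2) + 9 ↔
      t i = false ∨ t j = false) :=
  clause_gadget_general m n t i j hi1 hi2 hj1 hj2 pe pf ph hpe hpf hph
end

section
/- Consider a highway instance with edges 1, …, N on a line and customers j = 1, …, m with intervals I_j = {l_j, l_j+1, …, r_j} and budgets B_j ∈ ℝ, and suppose there is an index t with l_j ≤ t ≤ r_j for every j (all intervals share edge t). Then the supremum, over all pricings p : {1, …, N} → ℝ (negative prices allowed), of Σ_{j : Σ_{i=l_j}^{r_j} p(i) ≤ B_j} Σ_{i=l_j}^{r_j} p(i) equals the supremum, over all pairs of functions u : {1, …, t} → ℝ and w : {t, …, N} → ℝ, of Σ_{j : u(l_j)+w(r_j) ≤ B_j} (u(l_j) + w(r_j)). -/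
/-! Every edge pricing `p` induces the two-sided pricing `u a = ∑_{a ≤ i ≤ t} p i`,
`w b = ∑_{t < i ≤ b} p i`. Conversely, `u a + w b` is the interval sum of the telescoping
differences of `φ`, where `φ a = -u a` for `a ≤ t` and `φ (b + 1) = w b` for `b ≥ t`. So both
suprema are taken over the same set of profits. -/

section IntervalSums

variable {M : Type*} [AddCommGroup M]

theorem Finset.sum_Icc_eq_sum_Icc_add_sum_Ioc (p : ℕ → M) {a t b : ℕ} (hat : a ≤ t)
    (htb : t ≤ b) :
    ∑ i ∈ Icc a b, p i = ∑ i ∈ Icc a t, p i + ∑ i ∈ Ioc t b, p i := by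
  rw [← Ico_add_one_add_one_eq_Ioc, ← Ico_add_one_right_eq_Icc, ← Ico_add_one_right_eq_Icc,
    sum_Ico_consecutive p (by omega) (by omega)]

theorem exists_sum_Icc_eq_add (u w : ℕ → M) (t : ℕ) :
    ∃ p : ℕ → M, ∀ a b, a ≤ t → t ≤ b → ∑ i ∈ Finset.Icc a b, p i = u a + w b := by
  set φ : ℕ → M := fun i => if i ≤ t then -u i else w (i - 1)
  refine ⟨fun i => φ (i + 1) - φ i, fun a b hat htb => ?_⟩
  rw [Finset.sum_Icc_sub (by omega)]
  simp only [φ, if_pos hat, if_neg (show ¬b + 1 ≤ t by omega), Nat.add_sub_cancel]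
  abel

end IntervalSums

theorem highway_common_edge_split_general
    (m : ℕ) (l r : Fin m → ℕ) (B : Fin m → ℝ)
    (t : ℕ) (ht : ∀ j, l j ≤ t ∧ t ≤ r j) :
    sSup {x : ℝ | ∃ p : ℕ → ℝ,
        x = ∑ j, pay (∑ i ∈ Finset.Icc (l j) (r j), p i) (B j)} =
      sSup {x : ℝ | ∃ u w : ℕ → ℝ,
        x = ∑ j, pay (u (l j) + w (r j)) (B j)} := by
  congr 1
  ext x
  constructor
  · rintro ⟨p, rfl⟩
    refine ⟨fun a => ∑ i ∈ Finset.Icc a t, p i, fun b => ∑ i ∈ Finset.Ioc t b, p i, ?_⟩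
    simp only [Finset.sum_Icc_eq_sum_Icc_add_sum_Ioc p (ht _).1 (ht _).2]
  · rintro ⟨u, w, rfl⟩
    obtain ⟨p, hp⟩ := exists_sum_Icc_eq_add u w t
    exact ⟨p, by simp only [hp _ _ (ht _).1 (ht _).2]⟩

/-- splitting a common edge in the coupon model.
In a highway instance on edges `1, …, N` with intervals `[l j, r j]` and budgets
`B j`, all sharing a common edge `t`, the supremum over all (possibly negative)
edge pricings `p` of the profit equals the supremum over all pairs of functions
`u, w` of the profit of the two-sided item pricing `u (l j) + w (r j)`. -/
theorem highway_common_edge_split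
    (N m : ℕ) (l r : Fin m → ℕ) (B : Fin m → ℝ)
    (hl : ∀ j, 1 ≤ l j) (hlr : ∀ j, l j ≤ r j) (hr : ∀ j, r j ≤ N)
    (t : ℕ) (ht1 : 1 ≤ t) (htN : t ≤ N) (ht : ∀ j, l j ≤ t ∧ t ≤ r j) :
    sSup {x : ℝ | ∃ p : ℕ → ℝ,
        x = ∑ j, pay (∑ i ∈ Finset.Icc (l j) (r j), p i) (B j)} =
      sSup {x : ℝ | ∃ u w : ℕ → ℝ,
        x = ∑ j, pay (u (l j) + w (r j)) (B j)} :=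
  highway_common_edge_split_general m l r B t ht
end
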